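/- Let ξ : T² → (0,∞) and u : T² → ℝ² be smooth (periodic). Define the antisymmetric part A(u) = (∇u − (∇u)ᵀ)/2. Then ∫_{T²} div(ξ A(u)) · (∇ξ/ξ) dx = 0. -/

import Mathlib

open MeasureTheory

/-- `∂_i f`, the `i`-th partial derivative of `f : ℝ² → ℝ`. -/
noncomputable def pd (i : Fin 2) (f : (Fin 2 → ℝ) → ℝ) : (Fin 2 → ℝ) → ℝ :=
  fun x => fderiv ℝ f x (Pi.single i 1)

lemma contDiff_pd (i : Fin 2) {f : (Fin 2 → ℝ) → ℝ} (hf : ContDiff ℝ (⊤ : ℕ∞) f) :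
    ContDiff ℝ (⊤ : ℕ∞) (pd i f) :=
  (hf.fderiv_right (m := (⊤ : ℕ∞)) (by simp)).clm_apply contDiff_const

lemma pd_mul {f g : (Fin 2 → ℝ) → ℝ} (hf : ContDiff ℝ (⊤ : ℕ∞) f) (hg : ContDiff ℝ (⊤ : ℕ∞) g)
    (i : Fin 2) (x : Fin 2 → ℝ) :
    pd i (fun y => f y * g y) x = pd i f x * g x + f x * pd i g x := by
  unfold pd
  rw [fderiv_fun_mul (hf.differentiable (by simp) x)
    (hg.differentiable (by simp) x)]
  simp; ring

lemma pd_add {f g : (Fin 2 → ℝ) → ℝ} (hf : ContDiff ℝ (⊤ : ℕ∞) f) (hg : ContDiff ℝ (⊤ : ℕ∞) g)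
    (i : Fin 2) (x : Fin 2 → ℝ) :
    pd i (fun y => f y + g y) x = pd i f x + pd i g x := by
  unfold pd
  rw [fderiv_fun_add (hf.differentiable (by simp) x)
    (hg.differentiable (by simp) x)]
  simp

lemma pd_comm {f : (Fin 2 → ℝ) → ℝ} (hf : ContDiff ℝ (⊤ : ℕ∞) f) (i j : Fin 2) (x : Fin 2 → ℝ) :
    pd i (pd j f) x = pd j (pd i f) x := by
  have hd : DifferentiableAt ℝ (fderiv ℝ f) x :=
    ((hf.fderiv_right (m := (⊤ : ℕ∞)) (by simp)).differentiable (by simp) x)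
  have key : ∀ k l : Fin 2, pd k (pd l f) x
      = fderiv ℝ (fderiv ℝ f) x (Pi.single k 1) (Pi.single l 1) := by
    intro k l
    unfold pd
    rw [fderiv_clm_apply hd (differentiableAt_const _)]
    simp
  rw [key, key]
  exact (hf.contDiffAt.isSymmSndFDerivAt (by rw [minSmoothness_of_isRCLikeNormedField]; exact WithTop.coe_le_coe.mpr (le_top : (2 : ℕ∞) ≤ ⊤))) _ _

lemma pd_per {f : (Fin 2 → ℝ) → ℝ} (hf : ContDiff ℝ (⊤ : ℕ∞) f)
    (hper : ∀ x i, f (x + Pi.single i 1) = f x) (i k : Fin 2) (x : Fin 2 → ℝ) :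
    pd i f (x + Pi.single k 1) = pd i f x := by
  have h0 : HasFDerivAt (fun y : Fin 2 → ℝ => y + Pi.single k 1)
      (ContinuousLinearMap.id ℝ (Fin 2 → ℝ)) x := (hasFDerivAt_id x).add_const _
  have h1 := ((hf.differentiable (by simp) (x + Pi.single k 1)).hasFDerivAt).comp x h0
  simp only [ContinuousLinearMap.comp_id] at h1
  have hfun : (f ∘ fun y => y + Pi.single k 1) = f := funext fun y => hper y k
  rw [hfun] at h1
  unfold pd
  rw [← h1.fderiv]

/-- The antisymmetric part of the gradient, `A(u)_{ij} = (∂_i u_j - ∂_j u_i)/2`. -/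
noncomputable def Af (u : (Fin 2 → ℝ) → Fin 2 → ℝ) (i j : Fin 2) : (Fin 2 → ℝ) → ℝ :=
  fun y => (pd i (fun z => u z j) y - pd j (fun z => u z i) y) / 2

/-- The vector field `F_i = ∑_j A(u)_{ij} ∂_j ξ`. -/
noncomputable def Ff (ξ : (Fin 2 → ℝ) → ℝ) (u : (Fin 2 → ℝ) → Fin 2 → ℝ) (i : Fin 2) :
    (Fin 2 → ℝ) → ℝ :=
  fun x => Af u i 0 x * pd 0 ξ x + Af u i 1 x * pd 1 ξ x

lemma contDiff_Af {u : (Fin 2 → ℝ) → Fin 2 → ℝ} (hu : ContDiff ℝ (⊤ : ℕ∞) u) (i j : Fin 2) :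
    ContDiff ℝ (⊤ : ℕ∞) (Af u i j) :=
  ((contDiff_pd i (contDiff_pi.mp hu j)).sub (contDiff_pd j (contDiff_pi.mp hu i))).div_const 2

lemma contDiff_Ff {ξ : (Fin 2 → ℝ) → ℝ} {u : (Fin 2 → ℝ) → Fin 2 → ℝ}
    (hξ : ContDiff ℝ (⊤ : ℕ∞) ξ) (hu : ContDiff ℝ (⊤ : ℕ∞) u) (i : Fin 2) :
    ContDiff ℝ (⊤ : ℕ∞) (Ff ξ u i) :=
  ((contDiff_Af hu i 0).mul (contDiff_pd 0 hξ)).add ((contDiff_Af hu i 1).mul (contDiff_pd 1 hξ))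

lemma pd_Ff {ξ : (Fin 2 → ℝ) → ℝ} {u : (Fin 2 → ℝ) → Fin 2 → ℝ}
    (hξ : ContDiff ℝ (⊤ : ℕ∞) ξ) (hu : ContDiff ℝ (⊤ : ℕ∞) u) (k i : Fin 2) (x : Fin 2 → ℝ) :
    pd k (Ff ξ u i) x =
      (pd k (Af u i 0) x * pd 0 ξ x + Af u i 0 x * pd k (pd 0 ξ) x)
      + (pd k (Af u i 1) x * pd 1 ξ x + Af u i 1 x * pd k (pd 1 ξ) x) := by
  have h : Ff ξ u i = fun y => (fun z => Af u i 0 z * pd 0 ξ z) y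
      + (fun z => Af u i 1 z * pd 1 ξ z) y := rfl
  rw [h, pd_add ((contDiff_Af hu i 0).mul (contDiff_pd 0 hξ))
      ((contDiff_Af hu i 1).mul (contDiff_pd 1 hξ)),
    pd_mul (contDiff_Af hu i 0) (contDiff_pd 0 hξ),
    pd_mul (contDiff_Af hu i 1) (contDiff_pd 1 hξ)]

/-- Pointwise identity: the integrand equals the divergence of `F`. -/
lemma pointwise_div (ξ : (Fin 2 → ℝ) → ℝ) (u : (Fin 2 → ℝ) → Fin 2 → ℝ)
    (hξ : ContDiff ℝ (⊤ : ℕ∞) ξ) (hpos : ∀ x, 0 < ξ x) (hu : ContDiff ℝ (⊤ : ℕ∞) u) (x : Fin 2 → ℝ) :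
    (∑ j, (∑ i, pd i (fun y => ξ y *
        ((pd i (fun z => u z j) y - pd j (fun z => u z i) y) / 2)) x)
      * (pd j ξ x / ξ x)) = ∑ i, pd i (Ff ξ u i) x := by
  have hAe : ∀ i j : Fin 2, (fun y => ξ y *
      ((pd i (fun z => u z j) y - pd j (fun z => u z i) y) / 2)) = fun y => ξ y * Af u i j y :=
    fun i j => rfl
  simp only [hAe, Fin.sum_univ_two]
  rw [pd_mul hξ (contDiff_Af hu 0 0), pd_mul hξ (contDiff_Af hu 1 0),
    pd_mul hξ (contDiff_Af hu 0 1), pd_mul hξ (contDiff_Af hu 1 1),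
    pd_Ff hξ hu 0 0 x, pd_Ff hξ hu 1 1 x,
    pd_comm hξ 1 0 x]
  have hA00 : Af u 0 0 x = 0 := by simp [Af]
  have hA11 : Af u 1 1 x = 0 := by simp [Af]
  have hA10 : Af u 1 0 x = -Af u 0 1 x := by simp [Af]; ring
  rw [hA00, hA11, hA10]
  have hne := (hpos x).ne'
  field_simp
  ring

/-- The integral of a divergence of a smooth periodic vector field over the unit cell vanishes. -/
lemma integral_div_zero (F : Fin 2 → (Fin 2 → ℝ) → ℝ) (hF : ∀ i, ContDiff ℝ (⊤ : ℕ∞) (F i))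
    (hFper : ∀ i k x, F i (x + Pi.single k 1) = F i x) :
    (∫ x in Set.Icc (0 : Fin 2 → ℝ) 1, ∑ i, pd i (F i) x) = 0 := by
  have hle : (0 : Fin 2 → ℝ) ≤ 1 := fun i => zero_le_one
  have Hi : IntegrableOn (fun x => ∑ i : Fin 2, fderiv ℝ (F i) x (Pi.single i 1))
      (Set.Icc (0 : Fin 2 → ℝ) 1) := by
    apply Continuous.integrableOn_Icc
    exact continuous_finset_sum _ fun i _ => by
      have := ((hF i).fderiv_right (m := (⊤ : ℕ∞)) (by simp)).clm_apply
        (contDiff_const (c := Pi.single i (1:ℝ)))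
      exact this.continuous
  have hdiv := integral_divergence_of_hasFDerivAt_off_countable' (n := 1)
    (0 : Fin 2 → ℝ) 1 hle F (fun i x => fderiv ℝ (F i) x) ∅ Set.countable_empty
    (fun i => ((hF i).continuous).continuousOn)
    (fun x _ i => ((hF i).differentiable (by simp) x).hasFDerivAt) Hi
  have key : ∀ (i : Fin 2) (y : Fin 1 → ℝ),
      (Fin.insertNth i ((1 : Fin 2 → ℝ) i) y : Fin 2 → ℝ)
        = (Fin.insertNth i ((0 : Fin 2 → ℝ) i) y : Fin 2 → ℝ) + Pi.single i 1 := by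
    intro i y
    funext j
    rcases eq_or_ne j i with rfl | h
    · simp
    · obtain ⟨k, rfl⟩ := Fin.exists_succAbove_eq h
      simp [Fin.insertNth_apply_succAbove, Pi.single_eq_of_ne (Fin.succAbove_ne i k)]
  unfold pd
  rw [hdiv]
  refine Finset.sum_eq_zero fun i _ => sub_eq_zero.mpr ?_
  refine setIntegral_congr_fun measurableSet_Icc fun y _ => ?_
  rw [key i y, hFper i i _]

/-- The key cancellation in the Bresch–Desjardins entropy estimate:
`∫_{T²} div(ξ A(u)) · ∇ξ/ξ dx = 0`, where `A(u)` is the antisymmetric part of `∇u`,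
for smooth periodic `ξ > 0` and `u`. -/
theorem stmt7 (ξ : (Fin 2 → ℝ) → ℝ) (u : (Fin 2 → ℝ) → Fin 2 → ℝ)
    (hξ : ContDiff ℝ (⊤ : ℕ∞) ξ) (hpos : ∀ x, 0 < ξ x) (hu : ContDiff ℝ (⊤ : ℕ∞) u)
    (hperξ : ∀ x i, ξ (x + Pi.single i 1) = ξ x)
    (hperu : ∀ x i, u (x + Pi.single i 1) = u x) :
    (∫ x in Set.Icc (0 : Fin 2 → ℝ) 1,
      ∑ j, (∑ i, pd i (fun y => ξ y *
            ((pd i (fun z => u z j) y - pd j (fun z => u z i) y) / 2)) x)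
          * (pd j ξ x / ξ x)) = 0 := by
  have hAfper : ∀ i j k x, Af u i j (x + Pi.single k 1) = Af u i j x := by
    intro i j k x
    unfold Af
    rw [pd_per (contDiff_pi.mp hu j) (fun y l => congrFun (hperu y l) j) i k x,
      pd_per (contDiff_pi.mp hu i) (fun y l => congrFun (hperu y l) i) j k x]
  have hFper : ∀ i k x, Ff ξ u i (x + Pi.single k 1) = Ff ξ u i x := by
    intro i k x
    unfold Ff
    rw [hAfper i 0 k x, hAfper i 1 k x, pd_per hξ hperξ 0 k x, pd_per hξ hperξ 1 k x]
  rw [setIntegral_congr_fun measurableSet_Icc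
    (fun x _ => pointwise_div ξ u hξ hpos hu x)]
  exact integral_div_zero (Ff ξ u) (contDiff_Ff hξ hu) hFper
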